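/- Every coalgebra $C$ over a field $k$ is the directed union of its finite-dimensional subcoalgebras. -/

import Mathlib

/-!
The dual algebra `C* = C →ₗ[k] k` acts on `C` from both sides by the hit actions
`φ ⇀ c = ∑ c₁ φ(c₂)` and `c ↼ φ = ∑ φ(c₁) c₂`; coassociativity says that `Δ` intertwines
them, so the two actions commute and compose again to hit actions. Over a field a tensor
`w ∈ C ⊗ C` lies in `D ⊗ C` as soon as all its slices `(id ⊗ φ) w` lie in `D`, and
`(D ⊗ C) ∩ (C ⊗ D) = D ⊗ D`; hence a subspace stable under both actions is a subcoalgebra.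
The sub-bimodule `C* ⇀ c ↼ C*` generated by `c` contains `c` (take `φ = ε`) and is
finite-dimensional: `c ↼ ψ` ranges over the span of the finitely many right tensor factors
`y` of `Δ c`, and `φ ⇀ y` over the span of the left tensor factors of `Δ y`.
Directedness holds because a sum of subcoalgebras is a subcoalgebra.
-/

open TensorProduct

/-- A subspace `S ⊆ C` is a subcoalgebra if `Δ(S) ⊆ S ⊗ S` (where `S ⊗ S` is identified
with its image in `C ⊗ C`). -/
def IsSubcoalgebra {k C : Type*} [Field k] [AddCommGroup C] [Module k C] [Coalgebra k C]
    (S : Submodule k C) : Prop :=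
  ∀ x ∈ S, Coalgebra.comul (R := k) x ∈
    LinearMap.range (TensorProduct.map S.subtype S.subtype)

namespace TensorProduct

open LinearMap

section CommSemiring

variable {R U V W : Type*} [CommSemiring R] [AddCommMonoid U] [Module R U]
  [AddCommMonoid V] [Module R V] [AddCommMonoid W] [Module R W]

def sliceRight (φ : W →ₗ[R] R) : V ⊗[R] W →ₗ[R] V :=
  (TensorProduct.rid R V).toLinearMap ∘ₗ φ.lTensor V

def sliceLeft (φ : V →ₗ[R] R) : V ⊗[R] W →ₗ[R] W :=
  (TensorProduct.lid R W).toLinearMap ∘ₗ φ.rTensor W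

@[simp] lemma sliceRight_tmul (φ : W →ₗ[R] R) (v : V) (w : W) :
    sliceRight φ (v ⊗ₜ[R] w) = φ w • v := by
  simp [sliceRight]

@[simp] lemma sliceLeft_tmul (φ : V →ₗ[R] R) (v : V) (w : W) :
    sliceLeft φ (v ⊗ₜ[R] w) = φ v • w := by
  simp [sliceLeft]

lemma sliceRight_rTensor (φ : W →ₗ[R] R) (f : V →ₗ[R] U) (z : V ⊗[R] W) :
    sliceRight φ (f.rTensor W z) = f (sliceRight φ z) := by
  induction z using TensorProduct.induction_on <;> simp_all

lemma sliceLeft_lTensor (φ : V →ₗ[R] R) (f : W →ₗ[R] U) (z : V ⊗[R] W) :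
    sliceLeft φ (f.lTensor V z) = f (sliceLeft φ z) := by
  induction z using TensorProduct.induction_on <;> simp_all

lemma sliceRight_lTensor (φ : U →ₗ[R] R) (f : W →ₗ[R] U) (z : V ⊗[R] W) :
    sliceRight φ (f.lTensor V z) = sliceRight (φ ∘ₗ f) z := by
  induction z using TensorProduct.induction_on <;> simp_all

lemma sliceLeft_rTensor (φ : U →ₗ[R] R) (f : V →ₗ[R] U) (z : V ⊗[R] W) :
    sliceLeft φ (f.rTensor W z) = sliceLeft (φ ∘ₗ f) z := by
  induction z using TensorProduct.induction_on <;> simp_all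

lemma lTensor_sliceRight_assoc (φ : W →ₗ[R] R) (z : (U ⊗[R] V) ⊗[R] W) :
    (sliceRight φ).lTensor U (TensorProduct.assoc R U V W z) = sliceRight φ z := by
  induction z using TensorProduct.induction_on with
  | zero => simp
  | tmul x w => induction x using TensorProduct.induction_on <;> simp_all [add_tmul, tmul_smul]
  | add x y hx hy => simp_all

lemma sliceLeft_assoc (φ : U →ₗ[R] R) (z : (U ⊗[R] V) ⊗[R] W) :
    sliceLeft φ (TensorProduct.assoc R U V W z) = (sliceLeft φ).rTensor W z := by
  induction z using TensorProduct.induction_on with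
  | zero => simp
  | tmul x w => induction x using TensorProduct.induction_on <;> simp_all [add_tmul, smul_tmul']
  | add x y hx hy => simp_all

lemma exists_finset_forall_sliceRight_mem_span (z : V ⊗[R] W) :
    ∃ s : Finset V, ∀ φ : W →ₗ[R] R, sliceRight φ z ∈ Submodule.span R (s : Set V) := by
  classical
  obtain ⟨t, rfl⟩ := exists_finset z
  refine ⟨t.image Prod.fst, fun φ => ?_⟩
  simp only [map_sum, sliceRight_tmul]
  exact Submodule.sum_mem _ fun p hp =>
    Submodule.smul_mem _ _ (Submodule.subset_span (Finset.mem_image_of_mem _ hp))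

lemma exists_finset_forall_sliceLeft_mem_span (z : V ⊗[R] W) :
    ∃ s : Finset W, ∀ φ : V →ₗ[R] R, sliceLeft φ z ∈ Submodule.span R (s : Set W) := by
  classical
  obtain ⟨t, rfl⟩ := exists_finset z
  refine ⟨t.image Prod.snd, fun φ => ?_⟩
  simp only [map_sum, sliceLeft_tmul]
  exact Submodule.sum_mem _ fun p hp =>
    Submodule.smul_mem _ _ (Submodule.subset_span (Finset.mem_image_of_mem _ hp))

lemma eq_zero_of_forall_sliceRight_eq_zero [Module.Free R W] {z : V ⊗[R] W}
    (h : ∀ φ : W →ₗ[R] R, sliceRight φ z = 0) : z = 0 := by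
  classical
  let b := Module.Free.chooseBasis R W
  apply (equivFinsuppOfBasisRight b).injective
  ext i
  simpa [equivFinsuppOfBasisRight_apply, sliceRight] using h (b.coord i)

lemma eq_zero_of_forall_sliceLeft_eq_zero [Module.Free R V] {z : V ⊗[R] W}
    (h : ∀ φ : V →ₗ[R] R, sliceLeft φ z = 0) : z = 0 := by
  classical
  let b := Module.Free.chooseBasis R V
  apply (equivFinsuppOfBasisLeft b).injective
  ext i
  simpa [equivFinsuppOfBasisLeft_apply, sliceLeft] using h (b.coord i)

end CommSemiring

section CommRing

variable {R V W : Type*} [CommRing R] [AddCommGroup V] [Module R V] [AddCommGroup W] [Module R W]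

lemma mem_range_rTensor_subtype_of_forall_sliceRight_mem [Module.Free R W]
    {D : Submodule R V} {z : V ⊗[R] W} (h : ∀ φ : W →ₗ[R] R, sliceRight φ z ∈ D) :
    z ∈ range (D.subtype.rTensor W) := by
  rw [← rTensor_mkQ, mem_ker]
  refine eq_zero_of_forall_sliceRight_eq_zero fun φ => ?_
  rw [sliceRight_rTensor, Submodule.mkQ_apply, Submodule.Quotient.mk_eq_zero]
  exact h φ

lemma mem_range_lTensor_subtype_of_forall_sliceLeft_mem [Module.Free R V]
    {D : Submodule R W} {z : V ⊗[R] W} (h : ∀ φ : V →ₗ[R] R, sliceLeft φ z ∈ D) :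
    z ∈ range (D.subtype.lTensor V) := by
  rw [← lTensor_mkQ, mem_ker]
  refine eq_zero_of_forall_sliceLeft_eq_zero fun φ => ?_
  rw [sliceLeft_lTensor, Submodule.mkQ_apply, Submodule.Quotient.mk_eq_zero]
  exact h φ

end CommRing

variable {k V W : Type*} [Field k] [AddCommGroup V] [Module k V] [AddCommGroup W] [Module k W]

lemma range_rTensor_subtype_inf_range_lTensor_subtype (S : Submodule k V) (T : Submodule k W) :
    range (S.subtype.rTensor W) ⊓ range (T.subtype.lTensor V) = range (mapIncl S T) := by
  refine le_antisymm ?_ (le_inf ?_ ?_)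
  · rintro z ⟨⟨x, rfl⟩, y, hy⟩
    obtain ⟨p, hp⟩ := T.subtype.exists_leftInverse_of_injective T.ker_subtype
    have hfix : (T.subtype ∘ₗ p).lTensor V (S.subtype.rTensor W x) = S.subtype.rTensor W x := by
      rw [← hy, ← LinearMap.comp_apply, ← lTensor_comp, comp_assoc, hp, comp_id]
    refine ⟨p.lTensor S x, ?_⟩
    rw [← hfix]
    simp only [mapIncl, lTensor, rTensor, map_map, comp_id, id_comp]
  · rw [mapIncl, ← rTensor_comp_lTensor]; exact range_comp_le_range _ _
  · rw [mapIncl, ← lTensor_comp_rTensor]; exact range_comp_le_range _ _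

end TensorProduct

namespace Coalgebra

open LinearMap

section CommSemiring

variable {R C : Type*} [CommSemiring R] [AddCommMonoid C] [Module R C] [Coalgebra R C]

-- `φ ⇀ c = ∑ c₁ φ(c₂)`
def leftHit (φ : C →ₗ[R] R) : C →ₗ[R] C := sliceRight φ ∘ₗ comul (R := R)

-- `c ↼ φ = ∑ φ(c₁) c₂`
def rightHit (φ : C →ₗ[R] R) : C →ₗ[R] C := sliceLeft φ ∘ₗ comul (R := R)

lemma leftHit_apply (φ : C →ₗ[R] R) (c : C) : leftHit φ c = sliceRight φ (comul c) := rfl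

lemma rightHit_apply (φ : C →ₗ[R] R) (c : C) : rightHit φ c = sliceLeft φ (comul c) := rfl

@[simp] lemma leftHit_counit (c : C) : leftHit (counit (R := R)) c = c := by
  simp [leftHit_apply, sliceRight]

@[simp] lemma rightHit_counit (c : C) : rightHit (counit (R := R)) c = c := by
  simp [rightHit_apply, sliceLeft]

lemma comul_leftHit (φ : C →ₗ[R] R) (c : C) :
    comul (R := R) (leftHit φ c) = (leftHit φ).lTensor C (comul c) := by
  rw [leftHit_apply, ← sliceRight_rTensor, leftHit, lTensor_comp, LinearMap.comp_apply,
    ← coassoc_apply, lTensor_sliceRight_assoc]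

lemma comul_rightHit (φ : C →ₗ[R] R) (c : C) :
    comul (R := R) (rightHit φ c) = (rightHit φ).rTensor C (comul c) := by
  rw [rightHit_apply, ← sliceLeft_lTensor, rightHit, rTensor_comp, LinearMap.comp_apply,
    ← coassoc_apply, sliceLeft_assoc]

lemma leftHit_leftHit (φ ψ : C →ₗ[R] R) (c : C) :
    leftHit φ (leftHit ψ c) = leftHit (φ ∘ₗ leftHit ψ) c := by
  rw [leftHit_apply, comul_leftHit, sliceRight_lTensor, leftHit_apply]

lemma rightHit_rightHit (φ ψ : C →ₗ[R] R) (c : C) :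
    rightHit φ (rightHit ψ c) = rightHit (φ ∘ₗ rightHit ψ) c := by
  rw [rightHit_apply, comul_rightHit, sliceLeft_rTensor, rightHit_apply]

lemma leftHit_rightHit (φ ψ : C →ₗ[R] R) (c : C) :
    leftHit φ (rightHit ψ c) = rightHit ψ (leftHit φ c) := by
  rw [leftHit_apply, comul_rightHit, sliceRight_rTensor, leftHit_apply]

variable (R) in
def hitSpan (c : C) : Submodule R C :=
  Submodule.span R {x | ∃ φ ψ : C →ₗ[R] R, leftHit φ (rightHit ψ c) = x}

lemma self_mem_hitSpan (c : C) : c ∈ hitSpan R c :=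
  Submodule.subset_span ⟨counit, counit, by simp⟩

lemma hitSpan_le_comap_leftHit (c : C) (φ : C →ₗ[R] R) :
    hitSpan R c ≤ (hitSpan R c).comap (leftHit φ) :=
  Submodule.span_le.2 fun _ ⟨φ', ψ, hx⟩ => hx ▸ Submodule.subset_span
    ⟨φ ∘ₗ leftHit φ', ψ, (leftHit_leftHit _ _ _).symm⟩

lemma hitSpan_le_comap_rightHit (c : C) (φ : C →ₗ[R] R) :
    hitSpan R c ≤ (hitSpan R c).comap (rightHit φ) :=
  Submodule.span_le.2 fun _ ⟨φ', ψ, hx⟩ => hx ▸ Submodule.subset_span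
    ⟨φ', φ ∘ₗ rightHit ψ, by rw [← leftHit_rightHit, rightHit_rightHit]⟩

end CommSemiring

variable {k C : Type*} [Field k] [AddCommGroup C] [Module k C] [Coalgebra k C]

lemma exists_finset_hitSpan_le_span (c : C) :
    ∃ s : Finset C, hitSpan k c ≤ Submodule.span k s := by
  classical
  obtain ⟨t, ht⟩ := exists_finset_forall_sliceLeft_mem_span (comul (R := k) c)
  choose s hs using fun y : C => exists_finset_forall_sliceRight_mem_span (comul (R := k) y)
  refine ⟨t.biUnion s, Submodule.span_le.2 ?_⟩
  rintro _ ⟨φ, ψ, rfl⟩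
  have hmap : (Submodule.span k (t : Set C)).map (leftHit φ) ≤
      Submodule.span k (t.biUnion s) := by
    rw [Submodule.map_span_le]
    exact fun y hy =>
      Submodule.span_mono (Finset.coe_subset.2 (Finset.subset_biUnion_of_mem s hy)) (hs y φ)
  exact hmap ⟨_, ht ψ, rfl⟩

instance finiteDimensional_hitSpan (c : C) : FiniteDimensional k (hitSpan k c) :=
  let ⟨_, hs⟩ := exists_finset_hitSpan_le_span c
  Submodule.finiteDimensional_of_le hs

lemma isSubcoalgebra_of_le_comap_hit {D : Submodule k C}
    (hl : ∀ φ : C →ₗ[k] k, D ≤ D.comap (leftHit φ))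
    (hr : ∀ φ : C →ₗ[k] k, D ≤ D.comap (rightHit φ)) : IsSubcoalgebra D := fun x hx => by
  rw [← range_rTensor_subtype_inf_range_lTensor_subtype]
  exact ⟨mem_range_rTensor_subtype_of_forall_sliceRight_mem fun φ => hl φ hx,
    mem_range_lTensor_subtype_of_forall_sliceLeft_mem fun φ => hr φ hx⟩

lemma isSubcoalgebra_hitSpan (c : C) : IsSubcoalgebra (hitSpan k c) :=
  isSubcoalgebra_of_le_comap_hit (hitSpan_le_comap_leftHit c) (hitSpan_le_comap_rightHit c)

end Coalgebra

lemma IsSubcoalgebra.sup {k C : Type*} [Field k] [AddCommGroup C] [Module k C] [Coalgebra k C]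
    {S T : Submodule k C} (hS : IsSubcoalgebra S) (hT : IsSubcoalgebra T) :
    IsSubcoalgebra (S ⊔ T) := by
  intro x hx
  obtain ⟨s, hs, t, ht, rfl⟩ := Submodule.mem_sup.1 hx
  rw [map_add]
  exact add_mem (range_mapIncl_mono le_sup_left le_sup_left (hS s hs))
    (range_mapIncl_mono le_sup_right le_sup_right (hT t ht))

theorem coalgebra_is_directed_union_of_finite_dimensional_subcoalgebras
    (k C : Type*) [Field k] [AddCommGroup C] [Module k C] [Coalgebra k C] :
    (∀ c : C, ∃ S : Submodule k C,
      IsSubcoalgebra S ∧ FiniteDimensional k S ∧ c ∈ S) ∧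
    (∀ S T : Submodule k C,
      IsSubcoalgebra S → FiniteDimensional k S →
      IsSubcoalgebra T → FiniteDimensional k T →
      ∃ U : Submodule k C, IsSubcoalgebra U ∧ FiniteDimensional k U ∧ S ≤ U ∧ T ≤ U) :=
  ⟨fun c => ⟨Coalgebra.hitSpan k c, Coalgebra.isSubcoalgebra_hitSpan c, inferInstance,
      Coalgebra.self_mem_hitSpan c⟩,
    fun S T hS _ hT _ => ⟨S ⊔ T, hS.sup hT, inferInstance, le_sup_left, le_sup_right⟩⟩
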